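/- Let H be an infinite-dimensional complex Hilbert space. For every k ≥ 1, the variant geometric mean G'ₖ, defined recursively by G'₁(A) = A and G'_{k+1}(A₁,…,A_{k+1}) = A_{k+1}^{1/2} G'ₖ((A_{k+1}^{−1/2}A₁A_{k+1}^{−1/2})^{k/(k+1)}, …, (A_{k+1}^{−1/2}AₖA_{k+1}^{−1/2})^{k/(k+1)}) A_{k+1}^{1/2}, is concave: for all k-tuples (A₁,…,Aₖ) and (B₁,…,Bₖ) of positive definite invertible bounded operators on H and all λ ∈ [0,1], G'ₖ(λA₁+(1−λ)B₁, …, λAₖ+(1−λ)Bₖ) ≥ λ G'ₖ(A₁,…,Aₖ) + (1−λ) G'ₖ(B₁,…,Bₖ) in the Loewner order. -/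

import Mathlib

/-!
Concavity is proved together with monotonicity and the stronger Jensen-type inequality
`∑ⱼ Tⱼ* F(Cⱼ) Tⱼ ≤ F(∑ⱼ Tⱼ* Cⱼ Tⱼ)` for invertible `Tⱼ` with `∑ⱼ Tⱼ* Tⱼ ≤ 1`, by induction on `k`.
Both properties survive composing `F` coordinatewise with `x ↦ x ^ p` for `p ∈ [0, 1]` and taking
the perspective `(C, b) ↦ b^{1/2} F(b^{-1/2} C b^{-1/2}) b^{1/2}`; for the perspective, the
weights `Sⱼ = bⱼ^{1/2} Tⱼ b^{-1/2}` with `b = ∑ⱼ Tⱼ* bⱼ Tⱼ` satisfy `∑ⱼ Sⱼ* Sⱼ = 1`, so Jensen for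
`F` transfers. Monotonicity of `x ↦ x ^ p` is the Löwner–Heinz theorem. For its Jensen inequality,
the set of good exponents contains `0` and `1`, is closed, and is closed under midpoints, because
the geometric mean `a # b`, the largest `x ≥ 0` with `[[a, x], [x, b]] ≥ 0`, is monotone, satisfies
Jensen, and `a^p # a^q = a^{(p+q)/2}`.
-/

set_option synthInstance.maxHeartbeats 400000
set_option maxHeartbeats 1000000

noncomputable section

variable {H : Type*} [NormedAddCommGroup H] [InnerProductSpace ℂ H] [CompleteSpace H]

/-- `a` is a positive definite invertible bounded operator. -/
def IsPosDefInv (a : H →L[ℂ] H) : Prop := 0 ≤ a ∧ IsUnit a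

/-- The variant geometric mean: `varGM k` is the mean `G'_{k+1}` of `k+1` operator
variables, defined recursively by `G'₁(A) = A` and
`G'_{k+1}(A₁,…,A_{k+1}) = A_{k+1}^{1/2} G'ₖ((A_{k+1}^{-1/2}A₁A_{k+1}^{-1/2})^{k/(k+1)},…,(A_{k+1}^{-1/2}AₖA_{k+1}^{-1/2})^{k/(k+1)}) A_{k+1}^{1/2}`,
with fractional powers taken via the continuous functional calculus. -/
noncomputable def varGM : (k : ℕ) → (Fin (k + 1) → (H →L[ℂ] H)) → (H →L[ℂ] H)
  | 0, A => A 0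
  | (k + 1), A =>
      CFC.sqrt (A (Fin.last (k + 1))) *
        varGM k (fun i : Fin (k + 1) =>
          CFC.rpow
            (CFC.sqrt (Ring.inverse (A (Fin.last (k + 1)))) * A i.castSucc *
              CFC.sqrt (Ring.inverse (A (Fin.last (k + 1)))))
            ((k + 1 : ℝ) / (k + 2))) *
        CFC.sqrt (A (Fin.last (k + 1)))

open scoped Ring
open CFC Filter Set

theorem Icc_subset_of_isClosed_of_add_div_two_mem {S : Set ℝ} (hS : IsClosed S) (h₀ : 0 ∈ S)
    (h₁ : 1 ∈ S) (hmid : ∀ p ∈ S, ∀ q ∈ S, (p + q) / 2 ∈ S) : Icc 0 1 ⊆ S := by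
  have hdyadic : ∀ n k : ℕ, k ≤ 2 ^ n → (k : ℝ) / 2 ^ n ∈ S := by
    intro n
    induction n with
    | zero =>
      intro k hk
      interval_cases k <;> simpa
    | succ n ih =>
      intro k hk
      have hk' : (k : ℝ) / 2 ^ (n + 1) = ((k / 2 : ℕ) / 2 ^ n + (k - k / 2 : ℕ) / 2 ^ n) / 2 := by
        rw [Nat.cast_sub (Nat.div_le_self k 2)]
        ring
      rw [hk']
      exact hmid _ (ih _ (by omega)) _ (ih _ (by omega))
  intro p ⟨hp₀, hp₁⟩
  have hpow : Tendsto (fun n : ℕ => (2 : ℝ) ^ n) atTop atTop :=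
    tendsto_pow_atTop_atTop_of_one_lt one_lt_two
  refine hS.mem_of_tendsto ((tendsto_nat_floor_mul_div_atTop hp₀).comp hpow)
    (Eventually.of_forall fun n => hdyadic n _ ?_)
  exact Nat.floor_le_of_le (by push_cast; exact mul_le_of_le_one_left (by positivity) hp₁)

section

variable {A : Type*} [CStarAlgebra A] [PartialOrder A] {ι : Type*}

/-- The weights are invertible and there is at least one of them, so that `∑ⱼ Tⱼ* Cⱼ Tⱼ` stays
strictly positive. -/
structure IsMonotoneJensen (F : (ι → A) → A) : Prop where
  monotoneOn : MonotoneOn F {C | ∀ i, IsStrictlyPositive (C i)}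
  jensen : ∀ (n : ℕ) (T : Fin (n + 1) → A) (C : Fin (n + 1) → ι → A), (∀ j, IsUnit (T j)) →
    (∀ j i, IsStrictlyPositive (C j i)) → ∑ j, star (T j) * T j ≤ 1 →
    ∑ j, star (T j) * F (C j) * T j ≤ F fun i => ∑ j, star (T j) * C j i * T j

variable {F : (ι → A) → A}

theorem IsMonotoneJensen.star_mul_mul_le (hF : IsMonotoneJensen F) {t : A} (ht : IsUnit t)
    (ht₁ : star t * t ≤ 1) {C : ι → A} (hC : ∀ i, IsStrictlyPositive (C i)) :
    star t * F C * t ≤ F fun i => star t * C i * t := by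
  simpa using hF.jensen 0 (fun _ => t) (fun _ => C) (fun _ => ht) (fun _ => hC) (by simpa using ht₁)

theorem IsMonotoneJensen.smul_add_smul_le (hF : IsMonotoneJensen F) {C C' : ι → A}
    (hC : ∀ i, IsStrictlyPositive (C i)) (hC' : ∀ i, IsStrictlyPositive (C' i)) {t : ℝ}
    (ht₀ : 0 ≤ t) (ht₁ : t ≤ 1) :
    t • F C + (1 - t) • F C' ≤ F fun i => t • C i + (1 - t) • C' i := by
  rcases ht₀.eq_or_lt with rfl | ht₀
  · simp
  rcases ht₁.eq_or_lt with rfl | ht₁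
  · simp
  have ht : √t * √t = t := Real.mul_self_sqrt ht₀.le
  have ht' : √(1 - t) * √(1 - t) = 1 - t := Real.mul_self_sqrt (sub_nonneg.2 ht₁.le)
  let T : Fin 2 → A := ![√t • 1, √(1 - t) • 1]
  have hT : ∀ j, IsUnit (T j) := by
    intro j
    fin_cases j
    exacts [isUnit_one.smul (Units.mk0 _ (Real.sqrt_pos.2 ht₀).ne'),
      isUnit_one.smul (Units.mk0 _ (Real.sqrt_pos.2 (sub_pos.2 ht₁)).ne')]
  have key := hF.jensen 1 T ![C, C'] hT (fun j => by fin_cases j <;> assumption)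
    (by simp [T, smul_smul, ht, ht', ← add_smul])
  simpa [T, smul_smul, ht, ht'] using key

theorem isMonotoneJensen_apply (i : ι) : IsMonotoneJensen fun C : ι → A => C i where
  monotoneOn _ _ _ _ h := h i
  jensen _ _ _ _ _ _ := le_rfl

end

section

variable {A : Type*} [CStarAlgebra A] [PartialOrder A] [StarOrderedRing A] {ι : Type*}

theorem CFC.sqrt_mul_sqrt_ringInverse {b : A} (hb : IsStrictlyPositive b) :
    sqrt b * sqrt b⁻¹ʳ = 1 := by
  rw [sqrt_ringInverse, Ring.mul_inverse_cancel _ hb.isUnit_cfcSqrt]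

theorem CFC.sqrt_ringInverse_mul_sqrt {b : A} (hb : IsStrictlyPositive b) :
    sqrt b⁻¹ʳ * sqrt b = 1 := by
  rw [sqrt_ringInverse, Ring.inverse_mul_cancel _ hb.isUnit_cfcSqrt]

theorem isStrictlyPositive_sum_star_mul_mul {n : ℕ} {T C : Fin (n + 1) → A}
    (hT : ∀ j, IsUnit (T j)) (hC : ∀ j, IsStrictlyPositive (C j)) :
    IsStrictlyPositive (∑ j, star (T j) * C j * T j) := by
  rw [Fin.sum_univ_succ]
  exact ((hT 0).isStrictlyPositive_star_left_conjugate_iff.2 (hC 0)).add_nonneg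
    (Finset.sum_nonneg fun j _ => star_left_conjugate_nonneg (hC j.succ).nonneg _)

def geomMean (a b : A) : A := conjSqrt b (sqrt (conjSqrt b⁻¹ʳ a))

theorem geomMean_nonneg (a b : A) : 0 ≤ geomMean a b :=
  conjugate_nonneg_of_nonneg (sqrt_nonneg _) (sqrt_nonneg _)

theorem conjSqrt_mul_conjSqrt {c : A} (hc : 0 ≤ c) (X Y : A) :
    conjSqrt c X * conjSqrt c Y = conjSqrt c (X * c * Y) := by
  simp only [conjSqrt_apply]
  calc _ = sqrt c * X * (sqrt c * sqrt c) * Y * sqrt c := by noncomm_ring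
    _ = _ := by rw [sqrt_mul_sqrt_self c hc]; noncomm_ring

theorem conjSqrt_mul_ringInverse_mul_conjSqrt {b : A} (hb : IsStrictlyPositive b) (X Y : A) :
    conjSqrt b X * b⁻¹ʳ * conjSqrt b Y = conjSqrt b (X * Y) := by
  rw [← sqrt_mul_sqrt_self b⁻¹ʳ hb.ringInverse.nonneg]
  simp only [conjSqrt_apply]
  calc _ = sqrt b * X * (sqrt b * sqrt b⁻¹ʳ) * (sqrt b⁻¹ʳ * sqrt b) * Y * sqrt b := by noncomm_ring
    _ = _ := by rw [sqrt_mul_sqrt_ringInverse hb, sqrt_ringInverse_mul_sqrt hb]; noncomm_ring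

theorem geomMean_mul_ringInverse_mul_geomMean {a b : A} (ha : 0 ≤ a) (hb : IsStrictlyPositive b) :
    geomMean a b * b⁻¹ʳ * geomMean a b = a := by
  rw [geomMean, conjSqrt_mul_ringInverse_mul_conjSqrt hb,
    sqrt_mul_sqrt_self (conjSqrt b⁻¹ʳ a) (conjugate_nonneg_of_nonneg ha (sqrt_nonneg _)),
    conjSqrt_conjSqrt_ringInverse b a hb]

/-- Nonnegativity of the block operator `[[a, x], [x, b]]`, tested against pairs `(c, d)`. -/
def BlockNonneg (a x b : A) : Prop :=
  ∀ c d : A, 0 ≤ star c * a * c + star c * x * d + star d * x * c + star d * b * d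

theorem BlockNonneg.mono {a x b a' b' : A} (h : BlockNonneg a x b) (ha : a ≤ a') (hb : b ≤ b') :
    BlockNonneg a' x b' := fun c d =>
  (h c d).trans <| add_le_add (add_le_add (add_le_add
    (star_left_conjugate_le_conjugate ha c) le_rfl) le_rfl) (star_left_conjugate_le_conjugate hb d)

theorem BlockNonneg.add {a x b a' x' b' : A} (h : BlockNonneg a x b) (h' : BlockNonneg a' x' b') :
    BlockNonneg (a + a') (x + x') (b + b') := fun c d => by
  convert add_nonneg (h c d) (h' c d) using 1
  noncomm_ring

theorem BlockNonneg.sum_star_conj {s : Finset ι} {a x b : ι → A}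
    (h : ∀ j ∈ s, BlockNonneg (a j) (x j) (b j)) (T : ι → A) :
    BlockNonneg (∑ j ∈ s, star (T j) * a j * T j) (∑ j ∈ s, star (T j) * x j * T j)
      (∑ j ∈ s, star (T j) * b j * T j) := by
  classical
  induction s using Finset.induction_on with
  | empty => intro c d; simp
  | insert j s hj ih =>
    simp only [Finset.sum_insert hj]
    refine BlockNonneg.add (fun c d => ?_) (ih fun i hi => h i (Finset.mem_insert_of_mem hi))
    convert h j (s.mem_insert_self j) (T j * c) (T j * d) using 1
    simp only [star_mul]
    noncomm_ring

theorem blockNonneg_geomMean {a b : A} (ha : 0 ≤ a) (hb : IsStrictlyPositive b) :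
    BlockNonneg a (geomMean a b) b := by
  intro c d
  set g := geomMean a b
  have hg : IsSelfAdjoint g := .of_nonneg (geomMean_nonneg a b)
  have hsi : IsSelfAdjoint (sqrt b⁻¹ʳ) := .of_nonneg (sqrt_nonneg _)
  have hs : IsSelfAdjoint (sqrt b) := .of_nonneg (sqrt_nonneg _)
  convert star_mul_self_nonneg (sqrt b⁻¹ʳ * g * c + sqrt b * d) using 1
  simp only [star_add, star_mul, hg.star_eq, hsi.star_eq, hs.star_eq]
  calc _ = star c * (g * b⁻¹ʳ * g) * c + star c * g * d + star d * g * c + star d * b * d := by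
        rw [geomMean_mul_ringInverse_mul_geomMean ha hb]
    _ = star c * (g * (sqrt b⁻¹ʳ * sqrt b⁻¹ʳ) * g) * c + star c * g * (sqrt b⁻¹ʳ * sqrt b) * d
        + star d * (sqrt b * sqrt b⁻¹ʳ) * g * c + star d * (sqrt b * sqrt b) * d := by
        rw [sqrt_mul_sqrt_self b⁻¹ʳ hb.ringInverse.nonneg, sqrt_ringInverse_mul_sqrt hb,
          sqrt_mul_sqrt_ringInverse hb, sqrt_mul_sqrt_self b hb.nonneg, mul_one, mul_one]
    _ = _ := by noncomm_ring

theorem BlockNonneg.mul_ringInverse_mul_le {a x b : A} (h : BlockNonneg a x b)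
    (hx : IsSelfAdjoint x) (hb : IsStrictlyPositive b) : x * b⁻¹ʳ * x ≤ a := by
  have hbi : IsSelfAdjoint b⁻¹ʳ := hb.ringInverse.isSelfAdjoint
  have key := h 1 (-(b⁻¹ʳ * x))
  simp only [star_one, one_mul, mul_one, star_neg, star_mul, hx.star_eq, hbi.star_eq, mul_neg,
    neg_mul, neg_neg] at key
  rw [mul_assoc x b⁻¹ʳ b, Ring.inverse_mul_cancel _ hb.isUnit, mul_one] at key
  rw [← sub_nonneg]
  convert key using 1
  simp only [← mul_assoc]
  abel

theorem BlockNonneg.le_geomMean {a x b : A} (h : BlockNonneg a x b) (hx : 0 ≤ x)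
    (hb : IsStrictlyPositive b) : x ≤ geomMean a b := by
  set y := conjSqrt b⁻¹ʳ x
  have hy : 0 ≤ y := conjugate_nonneg_of_nonneg hx (sqrt_nonneg _)
  calc x = conjSqrt b y := (conjSqrt_conjSqrt_ringInverse b x hb).symm
    _ ≤ geomMean a b := by
      -- `y * y ≤ conjSqrt b⁻¹ʳ a` is the Schur complement bound; `sqrt` is operator monotone.
      refine conjSqrt_le_conjSqrt ?_
      rw [← sqrt_mul_self y hy, conjSqrt_mul_conjSqrt hb.ringInverse.nonneg]
      exact sqrt_le_sqrt _ _ (conjSqrt_le_conjSqrt (h.mul_ringInverse_mul_le hx.isSelfAdjoint hb))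

theorem geomMean_mono {a b a' b' : A} (ha : 0 ≤ a) (hb : IsStrictlyPositive b)
    (hb' : IsStrictlyPositive b') (haa' : a ≤ a') (hbb' : b ≤ b') : geomMean a b ≤ geomMean a' b' :=
  ((blockNonneg_geomMean ha hb).mono haa' hbb').le_geomMean (geomMean_nonneg a b) hb'

theorem sum_star_mul_geomMean_mul_le {n : ℕ} {T X Y : Fin (n + 1) → A} (hT : ∀ j, IsUnit (T j))
    (hX : ∀ j, 0 ≤ X j) (hY : ∀ j, IsStrictlyPositive (Y j)) :
    ∑ j, star (T j) * geomMean (X j) (Y j) * T j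
      ≤ geomMean (∑ j, star (T j) * X j * T j) (∑ j, star (T j) * Y j * T j) :=
  (BlockNonneg.sum_star_conj (fun j _ => blockNonneg_geomMean (hX j) (hY j)) T).le_geomMean
    (Finset.sum_nonneg fun _ _ => star_left_conjugate_nonneg (geomMean_nonneg _ _) _)
    (isStrictlyPositive_sum_star_mul_mul hT hY)

theorem geomMean_rpow_rpow {a : A} (ha : IsStrictlyPositive a) (p q : ℝ) :
    geomMean (a ^ p) (a ^ q) = a ^ ((p + q) / 2) := by
  have hsqrt : ∀ r : ℝ, sqrt (a ^ r) = a ^ (r / 2) := fun r =>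
    sqrt_unique (by rw [← rpow_add ha.isUnit]; ring_nf) rpow_nonneg
  have hinv : (a ^ q)⁻¹ʳ = a ^ (-q) := by
    simpa using ((Ring.inverse_mul_eq_iff_eq_mul _ 1 _ (IsStrictlyPositive.rpow a q ha).isUnit).2
      (rpow_mul_rpow_neg q ha).symm)
  rw [geomMean, conjSqrt_apply, conjSqrt_apply, hinv, hsqrt, hsqrt, ← rpow_add ha.isUnit,
    ← rpow_add ha.isUnit, hsqrt, ← rpow_add ha.isUnit, ← rpow_add ha.isUnit]
  ring_nf

theorem CFC.continuous_const_rpow {a : A} (ha : IsStrictlyPositive a) :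
    Continuous fun p : ℝ => a ^ p := by
  simp_rw [rpow_eq_cfc_real ha.nonneg]
  have hspec : ∀ x ∈ spectrum ℝ a, x ≠ 0 := fun x hx => (ha.spectrum_pos hx).ne'
  refine continuous_iff_continuousAt.2 fun q => continuousAt_cfc_fun (fun u hu => ?_)
    (.of_forall fun _ => ContinuousOn.rpow_const continuousOn_id fun x hx => .inl (hspec x hx))
  have hcont : ContinuousOn (fun z : ℝ × ℝ => z.2 ^ z.1) (univ ×ˢ spectrum ℝ a) :=
    continuousOn_snd.rpow continuousOn_fst fun z hz => .inl (hspec _ hz.2)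
  obtain ⟨v, hv, hvu⟩ := (spectrum.isCompact a).mem_uniformity_of_prod (f := fun p x : ℝ => x ^ p)
    hcont (mem_univ q) (symm_le_uniformity hu)
  rw [nhdsWithin_univ] at hv
  exact eventually_of_mem hv fun p hp x hx => hvu p hp x hx

variable (A) in
def rpowJensenExponents : Set ℝ :=
  {p | ∀ (n : ℕ) (T C : Fin (n + 1) → A), (∀ j, IsUnit (T j)) → (∀ j, IsStrictlyPositive (C j)) →
    ∑ j, star (T j) * T j ≤ 1 → ∑ j, star (T j) * C j ^ p * T j ≤ (∑ j, star (T j) * C j * T j) ^ p}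

theorem isClosed_rpowJensenExponents : IsClosed (rpowJensenExponents A) := by
  simp only [rpowJensenExponents, ofPred_forall]
  refine isClosed_iInter fun n => isClosed_iInter fun T => isClosed_iInter fun C =>
    isClosed_iInter fun hT => isClosed_iInter fun hC => isClosed_iInter fun _ => isClosed_le ?_
      (continuous_const_rpow (isStrictlyPositive_sum_star_mul_mul hT hC))
  exact continuous_finsetSum _ fun j _ =>
    (continuous_const.mul (continuous_const_rpow (hC j))).mul continuous_const

theorem zero_mem_rpowJensenExponents : 0 ∈ rpowJensenExponents A := by
  intro n T C hT hC hT₁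
  simpa [rpow_zero _ (hC _).nonneg,
    rpow_zero _ (isStrictlyPositive_sum_star_mul_mul hT hC).nonneg] using hT₁

theorem one_mem_rpowJensenExponents : 1 ∈ rpowJensenExponents A := by
  intro n T C hT hC _
  simp [rpow_one _ (hC _).nonneg, rpow_one _ (isStrictlyPositive_sum_star_mul_mul hT hC).nonneg]

theorem add_div_two_mem_rpowJensenExponents {p q : ℝ} (hp : p ∈ rpowJensenExponents A)
    (hq : q ∈ rpowJensenExponents A) : (p + q) / 2 ∈ rpowJensenExponents A := by
  intro n T C hT hC hT₁
  have hS := isStrictlyPositive_sum_star_mul_mul hT hC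
  simp only [← geomMean_rpow_rpow (hC _), ← geomMean_rpow_rpow hS]
  calc ∑ j, star (T j) * geomMean (C j ^ p) (C j ^ q) * T j
      ≤ geomMean (∑ j, star (T j) * C j ^ p * T j) (∑ j, star (T j) * C j ^ q * T j) :=
        sum_star_mul_geomMean_mul_le hT (fun _ => rpow_nonneg)
          (fun j => IsStrictlyPositive.rpow _ q (hC j))
    _ ≤ _ := geomMean_mono (Finset.sum_nonneg fun _ _ => star_left_conjugate_nonneg rpow_nonneg _)
        (isStrictlyPositive_sum_star_mul_mul hT fun j => IsStrictlyPositive.rpow _ q (hC j))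
        (IsStrictlyPositive.rpow _ q hS) (hp n T C hT hC hT₁) (hq n T C hT hC hT₁)

theorem CFC.sum_star_mul_rpow_mul_le {p : ℝ} (hp : p ∈ Icc 0 1) {n : ℕ} {T C : Fin (n + 1) → A}
    (hT : ∀ j, IsUnit (T j)) (hC : ∀ j, IsStrictlyPositive (C j))
    (hT₁ : ∑ j, star (T j) * T j ≤ 1) :
    ∑ j, star (T j) * C j ^ p * T j ≤ (∑ j, star (T j) * C j * T j) ^ p :=
  Icc_subset_of_isClosed_of_add_div_two_mem isClosed_rpowJensenExponents
    zero_mem_rpowJensenExponents one_mem_rpowJensenExponents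
    (fun _ hp _ hq => add_div_two_mem_rpowJensenExponents hp hq) hp n T C hT hC hT₁

theorem star_mul_conjSqrt_mul {b b' : A} (hb' : IsStrictlyPositive b') (t X : A) :
    star t * conjSqrt b X * t
      = conjSqrt b' (star (sqrt b * t * sqrt b'⁻¹ʳ) * X * (sqrt b * t * sqrt b'⁻¹ʳ)) := by
  have hs : IsSelfAdjoint (sqrt b) := .of_nonneg (sqrt_nonneg _)
  have hsi : IsSelfAdjoint (sqrt b'⁻¹ʳ) := .of_nonneg (sqrt_nonneg _)
  simp only [conjSqrt_apply, star_mul, hs.star_eq, hsi.star_eq]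
  calc _ = (sqrt b' * sqrt b'⁻¹ʳ) * (star t * sqrt b * X * sqrt b * t)
        * (sqrt b'⁻¹ʳ * sqrt b') := by
        rw [sqrt_mul_sqrt_ringInverse hb', sqrt_ringInverse_mul_sqrt hb', one_mul, mul_one]
        noncomm_ring
    _ = _ := by noncomm_ring

theorem star_mul_conjSqrt_ringInverse_mul {b : A} (hb : IsStrictlyPositive b) (b' t Y : A) :
    star (sqrt b * t * sqrt b'⁻¹ʳ) * conjSqrt b⁻¹ʳ Y * (sqrt b * t * sqrt b'⁻¹ʳ)
      = conjSqrt b'⁻¹ʳ (star t * Y * t) := by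
  have hs : IsSelfAdjoint (sqrt b) := .of_nonneg (sqrt_nonneg _)
  have hsi : IsSelfAdjoint (sqrt b'⁻¹ʳ) := .of_nonneg (sqrt_nonneg _)
  simp only [conjSqrt_apply, star_mul, hs.star_eq, hsi.star_eq]
  calc _ = sqrt b'⁻¹ʳ * star t * (sqrt b * sqrt b⁻¹ʳ) * Y * (sqrt b⁻¹ʳ * sqrt b) * t
        * sqrt b'⁻¹ʳ := by noncomm_ring
    _ = _ := by rw [sqrt_mul_sqrt_ringInverse hb, sqrt_ringInverse_mul_sqrt hb]; noncomm_ring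

theorem star_mul_self_eq_conjSqrt {b : A} (hb : IsStrictlyPositive b) (b' t : A) :
    star (sqrt b * t * sqrt b'⁻¹ʳ) * (sqrt b * t * sqrt b'⁻¹ʳ)
      = conjSqrt b'⁻¹ʳ (star t * b * t) := by
  rw [← star_mul_conjSqrt_ringInverse_mul hb, conjSqrt_ringInverse_self b hb, mul_one]

def perspective (F : (ι → A) → A) (C : ι → A) (b : A) : A :=
  conjSqrt b (F fun i => conjSqrt b⁻¹ʳ (C i))

variable {F : (ι → A) → A}

theorem IsMonotoneJensen.comp_rpow (hF : IsMonotoneJensen F) {p : ℝ} (hp : p ∈ Icc 0 1) :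
    IsMonotoneJensen fun C : ι → A => F fun i => C i ^ p where
  monotoneOn _ hC _ hC' h :=
    hF.monotoneOn (fun i => IsStrictlyPositive.rpow _ p (hC i))
      (fun i => IsStrictlyPositive.rpow _ p (hC' i)) fun i => rpow_le_rpow hp (h i)
  jensen n T C hT hC hT₁ := by
    have hCp j i : IsStrictlyPositive (C j i ^ p) := IsStrictlyPositive.rpow _ p (hC j i)
    refine (hF.jensen n T _ hT hCp hT₁).trans (hF.monotoneOn ?_ ?_ fun i =>
      sum_star_mul_rpow_mul_le hp hT (hC · i) hT₁)
    · exact fun i => isStrictlyPositive_sum_star_mul_mul hT (hCp · i)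
    · exact fun i => IsStrictlyPositive.rpow _ p (isStrictlyPositive_sum_star_mul_mul hT (hC · i))

theorem isStrictlyPositive_conjSqrt_ringInverse {b a : A} (hb : IsStrictlyPositive b)
    (ha : IsStrictlyPositive a) : IsStrictlyPositive (conjSqrt b⁻¹ʳ a) :=
  (isStrictlyPositive_conjSqrt_iff _ _ hb.ringInverse).2 ha

theorem perspective_le_perspective_left (hF : MonotoneOn F {C | ∀ i, IsStrictlyPositive (C i)})
    {C C' : ι → A} (hC : ∀ i, IsStrictlyPositive (C i)) (hC' : ∀ i, IsStrictlyPositive (C' i))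
    (h : C ≤ C') {b : A} (hb : IsStrictlyPositive b) : perspective F C b ≤ perspective F C' b :=
  conjSqrt_le_conjSqrt <| hF (fun i => isStrictlyPositive_conjSqrt_ringInverse hb (hC i))
    (fun i => isStrictlyPositive_conjSqrt_ringInverse hb (hC' i))
    fun i => conjSqrt_le_conjSqrt (h i)

theorem perspective_le_perspective_right (hF : IsMonotoneJensen F) {C : ι → A}
    (hC : ∀ i, IsStrictlyPositive (C i)) {b b' : A} (hb : IsStrictlyPositive b)
    (hb' : IsStrictlyPositive b') (h : b ≤ b') : perspective F C b ≤ perspective F C b' := by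
  set s := sqrt b * 1 * sqrt b'⁻¹ʳ
  have hs : IsUnit s := (hb.isUnit_cfcSqrt.mul isUnit_one).mul hb'.ringInverse.isUnit_cfcSqrt
  have hs₁ : star s * s ≤ 1 := by
    rw [star_mul_self_eq_conjSqrt hb, star_one, one_mul, mul_one,
      ← conjSqrt_ringInverse_self b' hb']
    exact conjSqrt_le_conjSqrt h
  calc perspective F C b = conjSqrt b' (star s * F (fun i => conjSqrt b⁻¹ʳ (C i)) * s) := by
        rw [← star_mul_conjSqrt_mul hb', star_one, one_mul, mul_one, perspective]
    _ ≤ conjSqrt b' (F fun i => star s * conjSqrt b⁻¹ʳ (C i) * s) :=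
        conjSqrt_le_conjSqrt <| hF.star_mul_mul_le hs hs₁
          fun i => isStrictlyPositive_conjSqrt_ringInverse hb (hC i)
    _ = perspective F C b' := by
        simp only [s, star_mul_conjSqrt_ringInverse_mul hb]
        simp [perspective]

theorem sum_star_mul_perspective_mul_le (hF : IsMonotoneJensen F) {n : ℕ} {T : Fin (n + 1) → A}
    {C : Fin (n + 1) → ι → A} {B : Fin (n + 1) → A} (hT : ∀ j, IsUnit (T j))
    (hC : ∀ j i, IsStrictlyPositive (C j i)) (hB : ∀ j, IsStrictlyPositive (B j)) :
    ∑ j, star (T j) * perspective F (C j) (B j) * T j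
      ≤ perspective F (fun i => ∑ j, star (T j) * C j i * T j) (∑ j, star (T j) * B j * T j) := by
  set b := ∑ j, star (T j) * B j * T j
  have hb : IsStrictlyPositive b := isStrictlyPositive_sum_star_mul_mul hT hB
  set S : Fin (n + 1) → A := fun j => sqrt (B j) * T j * sqrt b⁻¹ʳ
  have hS : ∀ j, IsUnit (S j) := fun j =>
    ((hB j).isUnit_cfcSqrt.mul (hT j)).mul hb.ringInverse.isUnit_cfcSqrt
  have hS₁ : ∑ j, star (S j) * S j ≤ 1 := by
    simp only [S, star_mul_self_eq_conjSqrt (hB _), ← map_sum]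
    exact (conjSqrt_ringInverse_self b hb).le
  calc ∑ j, star (T j) * perspective F (C j) (B j) * T j
      = conjSqrt b (∑ j, star (S j) * F (fun i => conjSqrt (B j)⁻¹ʳ (C j i)) * S j) := by
        simp only [perspective, star_mul_conjSqrt_mul hb, map_sum, S]
    _ ≤ conjSqrt b (F fun i => ∑ j, star (S j) * conjSqrt (B j)⁻¹ʳ (C j i) * S j) :=
        conjSqrt_le_conjSqrt <| hF.jensen n S _ hS
          (fun j i => isStrictlyPositive_conjSqrt_ringInverse (hB j) (hC j i)) hS₁
    _ = _ := by
        simp only [S, star_mul_conjSqrt_ringInverse_mul (hB _), ← map_sum, perspective, b]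

theorem IsMonotoneJensen.perspective {n : ℕ} {F : (Fin n → A) → A} (hF : IsMonotoneJensen F) :
    IsMonotoneJensen fun C : Fin (n + 1) → A => perspective F (Fin.init C) (C (Fin.last n)) where
  monotoneOn _ hC _ hC' h :=
    (perspective_le_perspective_left hF.monotoneOn (fun _ => hC _) (fun _ => hC' _)
      (fun _ => h _) (hC _)).trans
    (perspective_le_perspective_right hF (fun _ => hC' _) (hC _) (hC' _) (h _))
  jensen _ _ _ hT hC _ := sum_star_mul_perspective_mul_le hF hT (fun j _ => hC j _) fun j => hC j _

end

theorem varGM_succ (k : ℕ) :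
    varGM (H := H) (k + 1) = fun C => perspective
      (fun D => varGM k fun i => D i ^ ((k + 1 : ℝ) / (k + 2)))
      (Fin.init C) (C (Fin.last (k + 1))) :=
  rfl

theorem isMonotoneJensen_varGM : ∀ k, IsMonotoneJensen (varGM (H := H) k)
  | 0 => isMonotoneJensen_apply 0
  | k + 1 => by
    rw [varGM_succ]
    refine ((isMonotoneJensen_varGM k).comp_rpow ⟨by positivity, ?_⟩).perspective
    rw [div_le_one (by positivity)]
    linarith

theorem varGM_concave_general (k : ℕ)
    (A B : Fin (k + 1) → (H →L[ℂ] H))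
    (hA : ∀ i, IsPosDefInv (A i)) (hB : ∀ i, IsPosDefInv (B i))
    (t : ℝ) (ht0 : 0 ≤ t) (ht1 : t ≤ 1) :
    t • varGM k A + (1 - t) • varGM k B ≤ varGM k (fun i => t • A i + (1 - t) • B i) :=
  (isMonotoneJensen_varGM k).smul_add_smul_le (fun i => (hA i).2.isStrictlyPositive (hA i).1)
    (fun i => (hB i).2.isStrictlyPositive (hB i).1) ht0 ht1

/-- **Concavity of the variant geometric mean.** For every `k ≥ 1`, the variant geometric
mean is concave in the Loewner order. -/
theorem varGM_concave
    (hH : ¬ FiniteDimensional ℂ H) (k : ℕ)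
    (A B : Fin (k + 1) → (H →L[ℂ] H))
    (hA : ∀ i, IsPosDefInv (A i)) (hB : ∀ i, IsPosDefInv (B i))
    (t : ℝ) (ht0 : 0 ≤ t) (ht1 : t ≤ 1) :
    t • varGM k A + (1 - t) • varGM k B ≤ varGM k (fun i => t • A i + (1 - t) • B i) :=
  varGM_concave_general k A B hA hB t ht0 ht1
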